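/- arXiv:math/0505346 — 3 statements merged into one kernel-verified Lean document; each statement's English description precedes it below -/
import Mathlib

section
/- The space $\mathcal{F}^\alpha$ of continuous real functions $\sigma$ on $[-\pi,\pi]$, $C^1$ away from $0$, with finite norm $\|\sigma\|_{\mathcal{F}^\alpha} = \|\sigma\|_{C^0} + \|\theta\sigma'\|_{C^\alpha}$, is continuously embedded into the Hölder space $C^\alpha([-\pi,\pi])$: there is a constant $C$ such that $\|\sigma\|_{C^\alpha} \le C\|\sigma\|_{\mathcal{F}^\alpha}$ for all $\sigma \in \mathcal{F}^\alpha$. -/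
/-!
Hölder continuity of `g` at `0` gives `|θ σ'(θ) - g 0| ≤ C |θ|^α`. Since `σ` is bounded, `g 0 = 0`:
otherwise `σ` would grow like `g 0 · log θ` as `θ → 0`. Hence `|σ'(θ)| ≤ C |θ|^(α-1)`, and
integrating on either side of `0` gives `|σ x - σ y| ≤ (C/α) |x^α - y^α| ≤ (C/α) |x - y|^α`;
the two sides glue at the cost of a factor `2`.
-/

/-- Membership in the space `𝓕^α` on `[-π,π]` with "norm" bounded by `C`:
`σ` is continuous, `C¹` away from `0`, `g` is a continuous extension of `θ ↦ θσ'(θ)`,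
and `|σ| ≤ C`, `|g| ≤ C`, with `g` `α`-Hölder with constant `C`. -/
def MemF (α C : ℝ) (σ σ' g : ℝ → ℝ) : Prop :=
  ContinuousOn σ (Set.Icc (-Real.pi) Real.pi) ∧
  (∀ θ ∈ Set.Icc (-Real.pi) Real.pi, θ ≠ 0 →
    HasDerivWithinAt σ (σ' θ) (Set.Icc (-Real.pi) Real.pi) θ) ∧
  ContinuousOn g (Set.Icc (-Real.pi) Real.pi) ∧
  (∀ θ ∈ Set.Icc (-Real.pi) Real.pi, θ ≠ 0 → g θ = θ * σ' θ) ∧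
  (∀ θ ∈ Set.Icc (-Real.pi) Real.pi, |σ θ| ≤ C) ∧
  (∀ θ ∈ Set.Icc (-Real.pi) Real.pi, |g θ| ≤ C) ∧
  (∀ x ∈ Set.Icc (-Real.pi) Real.pi, ∀ y ∈ Set.Icc (-Real.pi) Real.pi,
    |g x - g y| ≤ C * |x - y| ^ α)

open Set Real

theorem abs_sub_le_sub_of_abs_deriv_le {f f' G G' : ℝ → ℝ} {a b : ℝ} (hab : a ≤ b)
    (hf : ContinuousOn f (Icc a b)) (hG : ContinuousOn G (Icc a b))
    (hf' : ∀ x ∈ Ioo a b, HasDerivAt f (f' x) x) (hG' : ∀ x ∈ Ioo a b, HasDerivAt G (G' x) x)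
    (bound : ∀ x ∈ Ioo a b, |f' x| ≤ G' x) :
    |f b - f a| ≤ G b - G a := by
  have mono : ∀ {F F' : ℝ → ℝ}, ContinuousOn F (Icc a b) →
      (∀ x ∈ Ioo a b, HasDerivAt F (F' x) x) → (∀ x ∈ Ioo a b, 0 ≤ F' x) → F a ≤ F b := by
    intro F F' hF hF' hF'₀
    refine monotoneOn_of_hasDerivWithinAt_nonneg (f' := F') (convex_Icc a b) hF ?_ ?_
      (left_mem_Icc.2 hab) (right_mem_Icc.2 hab) hab
    · rw [interior_Icc]
      exact fun x hx => (hF' x hx).hasDerivWithinAt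
    · rwa [interior_Icc]
  have upper := mono (hG.sub hf) (fun x hx => (hG' x hx).sub (hf' x hx))
    fun x hx => by linarith [le_abs_self (f' x), bound x hx]
  have lower := mono (hG.add hf) (fun x hx => (hG' x hx).add (hf' x hx))
    fun x hx => by linarith [neg_abs_le (f' x), bound x hx]
  simp only [Pi.sub_apply, Pi.add_apply] at upper lower
  rw [abs_le]
  constructor <;> linarith

theorem abs_sub_le_of_abs_mul_deriv_le {f f' : ℝ → ℝ} {α C a b : ℝ} (hα : 0 < α)
    (ha : 0 ≤ a) (hab : a ≤ b) (hf : ContinuousOn f (Icc a b))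
    (hf' : ∀ θ ∈ Ioo a b, HasDerivAt f (f' θ) θ)
    (bound : ∀ θ ∈ Ioo a b, |θ * f' θ| ≤ C * θ ^ α) :
    |f b - f a| ≤ C / α * (b ^ α - a ^ α) := by
  rw [mul_sub]
  refine abs_sub_le_sub_of_abs_deriv_le (G := fun θ => C / α * θ ^ α)
    (G' := fun θ => C * θ ^ (α - 1)) hab hf
    (continuousOn_const.mul (continuous_rpow_const hα.le).continuousOn) hf' (fun θ hθ => ?_)
    (fun θ hθ => ?_)
  · have hθ : 0 < θ := ha.trans_lt hθ.1
    refine ((hasDerivAt_rpow_const (Or.inl hθ.ne')).const_mul (C / α)).congr_deriv ?_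
    rw [← mul_assoc, div_mul_cancel₀ C hα.ne']
  · have hθ0 : 0 < θ := ha.trans_lt hθ.1
    have hθ := bound θ hθ
    rw [abs_mul, abs_of_pos hθ0] at hθ
    rw [rpow_sub_one hθ0.ne', ← mul_div_assoc, le_div_iff₀ hθ0]
    linarith

theorem eq_zero_of_abs_mul_deriv_sub_le {σ σ' : ℝ → ℝ} {α C M b c : ℝ} (hα : 0 < α)
    (hC : 0 ≤ C) (hb : 0 < b) (hσ : ContinuousOn σ (Ioc 0 b))
    (hσ' : ∀ θ ∈ Ioo 0 b, HasDerivAt σ (σ' θ) θ) (hM : ∀ θ ∈ Ioc 0 b, |σ θ| ≤ M)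
    (bound : ∀ θ ∈ Ioo 0 b, |θ * σ' θ - c| ≤ C * θ ^ α) : c = 0 := by
  have growth : ∀ n : ℕ, |c| * n ≤ M + M + C / α * b ^ α := by
    intro n
    set a := b * exp (-n)
    have ha : 0 < a := by positivity
    have hab : a ≤ b := mul_le_of_le_one_right hb.le (exp_le_one_iff.2 (by simp))
    have hlog : log b - log a = n := by
      simp only [a, log_mul hb.ne' (exp_ne_zero _), log_exp]
      ring
    have est := abs_sub_le_of_abs_mul_deriv_le (f := fun θ => σ θ - c * log θ)
      (f' := fun θ => σ' θ - c / θ) hα ha.le hab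
      ((hσ.mono (Icc_subset_Ioc_iff hab |>.2 ⟨ha, le_rfl⟩)).sub
        (continuousOn_const.mul (continuousOn_log.mono fun θ hθ => (ha.trans_le hθ.1).ne')))
      (fun θ hθ => (hσ' θ ⟨ha.trans hθ.1, hθ.2⟩).sub
        ((hasDerivAt_log (ha.trans hθ.1).ne').const_mul c |>.congr_deriv (div_eq_mul_inv c θ).symm))
      (fun θ hθ => by
        have hθ0 : 0 < θ := ha.trans hθ.1
        rw [mul_sub, mul_div_cancel₀ c hθ0.ne']
        exact bound θ ⟨hθ0, hθ.2⟩)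
    have hdrop : C / α * (b ^ α - a ^ α) ≤ C / α * b ^ α :=
      mul_le_mul_of_nonneg_left (sub_le_self _ (rpow_nonneg ha.le α)) (by positivity)
    calc |c| * n = |(σ b - σ a) - ((σ b - c * log b) - (σ a - c * log a))| := by
          rw [← hlog, ← abs_of_nonneg (sub_nonneg.2 (log_le_log ha hab)), ← abs_mul]
          ring_nf
      _ ≤ (|σ b| + |σ a|) + C / α * b ^ α :=
          (abs_sub _ _).trans (add_le_add (abs_sub _ _) (est.trans hdrop))
      _ ≤ M + M + C / α * b ^ α := by
          gcongr
          exacts [hM b ⟨hb, le_rfl⟩, hM a ⟨ha, hab⟩]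
  by_contra hc
  obtain ⟨n, hn⟩ := exists_nat_gt ((M + M + C / α * b ^ α) / |c|)
  rw [div_lt_iff₀ (abs_pos.2 hc)] at hn
  linarith [growth n]

theorem abs_sub_le_rpow_of_abs_mul_deriv_le {σ σ' : ℝ → ℝ} {α C b : ℝ} (hα0 : 0 < α)
    (hα1 : α ≤ 1) (hC : 0 ≤ C) (hσ : ContinuousOn σ (Icc 0 b))
    (hσ' : ∀ θ ∈ Ioo 0 b, HasDerivAt σ (σ' θ) θ)
    (bound : ∀ θ ∈ Ioo 0 b, |θ * σ' θ| ≤ C * θ ^ α) :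
    ∀ x ∈ Icc 0 b, ∀ y ∈ Icc 0 b, |σ x - σ y| ≤ C / α * |x - y| ^ α := by
  intro x hx y hy
  wlog hxy : x ≤ y generalizing x y
  · rw [abs_sub_comm, abs_sub_comm x]
    exact this y hy x hx (le_of_not_ge hxy)
  have hsub : Icc x y ⊆ Icc 0 b := Icc_subset_Icc hx.1 hy.2
  have est := abs_sub_le_of_abs_mul_deriv_le hα0 hx.1 hxy (hσ.mono hsub)
    (fun θ hθ => hσ' θ (Ioo_subset_Ioo hx.1 hy.2 hθ))
    (fun θ hθ => bound θ (Ioo_subset_Ioo hx.1 hy.2 hθ))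
  have subadd : y ^ α ≤ (y - x) ^ α + x ^ α := by
    simpa using rpow_add_le_add_rpow (sub_nonneg.2 hxy) hx.1 hα0.le hα1
  rw [abs_sub_comm, abs_sub_comm x, abs_of_nonneg (sub_nonneg.2 hxy)]
  exact est.trans (mul_le_mul_of_nonneg_left (by linarith) (by positivity))

theorem abs_sub_le_two_mul_rpow_of_Icc_nonpos_of_Icc_nonneg {f : ℝ → ℝ} {K α b : ℝ}
    (hα : 0 ≤ α) (hK : 0 ≤ K)
    (hneg : ∀ x ∈ Icc (-b) 0, ∀ y ∈ Icc (-b) 0, |f x - f y| ≤ K * |x - y| ^ α)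
    (hpos : ∀ x ∈ Icc 0 b, ∀ y ∈ Icc 0 b, |f x - f y| ≤ K * |x - y| ^ α) :
    ∀ x ∈ Icc (-b) b, ∀ y ∈ Icc (-b) b, |f x - f y| ≤ 2 * K * |x - y| ^ α := by
  have cross : ∀ u ∈ Icc (-b) 0, ∀ v ∈ Icc 0 b, |f u - f v| ≤ 2 * K * |u - v| ^ α := by
    intro u hu v hv
    have h0 : (0 : ℝ) ∈ Icc (-b) 0 ∩ Icc 0 b := ⟨⟨by linarith [hu.1, hu.2], le_rfl⟩,
      ⟨le_rfl, by linarith [hv.1, hv.2]⟩⟩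
    have hu' : |u - 0| ≤ |u - v| := by
      rw [sub_zero, abs_of_nonpos hu.2, abs_of_nonpos (by linarith [hu.2, hv.1])]
      linarith [hv.1]
    have hv' : |0 - v| ≤ |u - v| := by
      rw [zero_sub, abs_neg, abs_of_nonneg hv.1, abs_of_nonpos (by linarith [hu.2, hv.1])]
      linarith [hu.2]
    calc |f u - f v| ≤ |f u - f 0| + |f 0 - f v| := abs_sub_le _ _ _
      _ ≤ K * |u - 0| ^ α + K * |0 - v| ^ α := add_le_add (hneg u hu 0 h0.1) (hpos 0 h0.2 v hv)
      _ ≤ K * |u - v| ^ α + K * |u - v| ^ α := by gcongr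
      _ = 2 * K * |u - v| ^ α := by ring
  intro x hx y hy
  have double : K * |x - y| ^ α ≤ 2 * K * |x - y| ^ α := by
    linarith [mul_nonneg hK (rpow_nonneg (abs_nonneg (x - y)) α)]
  rcases le_total x 0 with hx0 | hx0 <;> rcases le_total y 0 with hy0 | hy0
  · exact (hneg x ⟨hx.1, hx0⟩ y ⟨hy.1, hy0⟩).trans double
  · exact cross x ⟨hx.1, hx0⟩ y ⟨hy0, hy.2⟩
  · rw [abs_sub_comm, abs_sub_comm x]
    exact cross y ⟨hy.1, hy0⟩ x ⟨hx0, hx.2⟩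
  · exact (hpos x ⟨hx0, hx.2⟩ y ⟨hy0, hy.2⟩).trans double

theorem abs_sub_le_two_mul_rpow_of_abs_mul_deriv_le {σ σ' : ℝ → ℝ} {α C b : ℝ}
    (hα0 : 0 < α) (hα1 : α ≤ 1) (hC : 0 ≤ C) (hσ : ContinuousOn σ (Icc (-b) b))
    (hσ' : ∀ θ ∈ Ioo (-b) b, θ ≠ 0 → HasDerivAt σ (σ' θ) θ)
    (bound : ∀ θ ∈ Ioo (-b) b, θ ≠ 0 → |θ * σ' θ| ≤ C * |θ| ^ α) :
    ∀ x ∈ Icc (-b) b, ∀ y ∈ Icc (-b) b, |σ x - σ y| ≤ 2 * (C / α) * |x - y| ^ α := by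
  have pos := abs_sub_le_rpow_of_abs_mul_deriv_le hα0 hα1 hC
    (σ' := σ') (hσ.mono fun t ht => ⟨by linarith [ht.1, ht.2], ht.2⟩)
    (fun θ hθ => hσ' θ ⟨by linarith [hθ.1, hθ.2], hθ.2⟩ hθ.1.ne')
    (fun θ hθ => by simpa [abs_of_pos hθ.1] using bound θ ⟨by linarith [hθ.1, hθ.2], hθ.2⟩ hθ.1.ne')
  have neg := abs_sub_le_rpow_of_abs_mul_deriv_le (σ := fun t => σ (-t))
    (σ' := fun t => -σ' (-t)) hα0 hα1 hC
    (hσ.comp continuousOn_neg fun t ht => ⟨by linarith [ht.2], by linarith [ht.1, ht.2]⟩)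
    (fun θ hθ => ((hσ' (-θ) ⟨by linarith [hθ.2], by linarith [hθ.1, hθ.2]⟩
        (neg_ne_zero.2 hθ.1.ne')).comp θ (hasDerivAt_neg θ)).congr_deriv (mul_neg_one _))
    (fun θ hθ => by
      simpa [abs_of_pos hθ.1] using bound (-θ) ⟨by linarith [hθ.2], by linarith [hθ.1, hθ.2]⟩
        (neg_ne_zero.2 hθ.1.ne'))
  refine abs_sub_le_two_mul_rpow_of_Icc_nonpos_of_Icc_nonneg hα0.le (by positivity)
    (fun x hx y hy => ?_) pos
  simpa only [neg_neg, neg_sub_neg, abs_sub_comm y x] using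
    neg (-x) ⟨by linarith [hx.2], by linarith [hx.1]⟩ (-y) ⟨by linarith [hy.2], by linarith [hy.1]⟩

namespace MemF

variable {α C : ℝ} {σ σ' g : ℝ → ℝ}

theorem abs_apply_le (h : MemF α C σ σ' g) {θ : ℝ} (hθ : θ ∈ Icc (-π) π) : |σ θ| ≤ C :=
  h.2.2.2.2.1 θ hθ

theorem nonneg (h : MemF α C σ σ' g) : 0 ≤ C :=
  (abs_nonneg _).trans (h.abs_apply_le ⟨by linarith [pi_pos], pi_pos.le⟩)

theorem hasDerivAt (h : MemF α C σ σ' g) {θ : ℝ} (hθ : θ ∈ Ioo (-π) π) (hθ0 : θ ≠ 0) :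
    HasDerivAt σ (σ' θ) θ :=
  (h.2.1 θ (Ioo_subset_Icc_self hθ) hθ0).hasDerivAt (Icc_mem_nhds hθ.1 hθ.2)

theorem abs_mul_deriv_sub_le (h : MemF α C σ σ' g) {θ : ℝ} (hθ : θ ∈ Icc (-π) π)
    (hθ0 : θ ≠ 0) : |θ * σ' θ - g 0| ≤ C * |θ| ^ α := by
  obtain ⟨-, -, -, hg, -, -, hgHolder⟩ := h
  simpa [← hg θ hθ hθ0] using hgHolder θ hθ 0 ⟨by linarith [pi_pos], pi_pos.le⟩

theorem apply_zero (h : MemF α C σ σ' g) (hα : 0 < α) : g 0 = 0 :=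
  eq_zero_of_abs_mul_deriv_sub_le hα h.nonneg pi_pos
    (h.1.mono fun θ hθ => ⟨by linarith [hθ.1, pi_pos], hθ.2⟩)
    (fun θ hθ => h.hasDerivAt ⟨by linarith [hθ.1, pi_pos], hθ.2⟩ hθ.1.ne')
    (fun θ hθ => h.abs_apply_le ⟨by linarith [hθ.1, pi_pos], hθ.2⟩)
    (fun θ hθ => by
      simpa [abs_of_pos hθ.1] using
        h.abs_mul_deriv_sub_le ⟨by linarith [hθ.1, pi_pos], hθ.2.le⟩ hθ.1.ne')

end MemF

/-- the space `𝓕^α` embeds continuously into the Hölder space `C^α([-π,π])`: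
`‖σ‖_{C^α} ≤ K ‖σ‖_{𝓕^α}` with `K` independent of `σ`. -/
theorem stmt7 (α : ℝ) (hα0 : 0 < α) (hα1 : α < 1) :
    ∃ K : ℝ, ∀ C : ℝ, ∀ σ σ' g : ℝ → ℝ, MemF α C σ σ' g →
      (∀ x ∈ Set.Icc (-Real.pi) Real.pi, |σ x| ≤ K * C) ∧
      (∀ x ∈ Set.Icc (-Real.pi) Real.pi, ∀ y ∈ Set.Icc (-Real.pi) Real.pi,
        |σ x - σ y| ≤ K * C * |x - y| ^ α) := by
  refine ⟨1 + 2 / α, fun C σ σ' g h => ?_⟩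
  have hC := h.nonneg
  have holder := abs_sub_le_two_mul_rpow_of_abs_mul_deriv_le hα0 hα1.le hC h.1
    (fun _ => h.hasDerivAt)
    (fun θ hθ hθ0 => by
      simpa [h.apply_zero hα0] using h.abs_mul_deriv_sub_le (Ioo_subset_Icc_self hθ) hθ0)
  have hK : 2 * (C / α) ≤ (1 + 2 / α) * C := by
    rw [add_mul, one_mul, div_mul_eq_mul_div, mul_div_assoc]
    linarith
  refine ⟨fun x hx => ?_, fun x hx y hy => ?_⟩
  · calc |σ x| ≤ C := h.abs_apply_le hx
      _ ≤ (1 + 2 / α) * C := le_mul_of_one_le_left hC (by linarith [div_pos two_pos hα0])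
  · exact (holder x hx y hy).trans (by gcongr)
end

section
/- Let $p$ divide $k$, both even positive integers with $2 \le p \le k-2$, let $0 < a \le 1/\cos(p\pi/(2k))$, and set $b = (p/k)\tan(p\pi/(2k))$. Then the trigonometric polynomial $g_1(\theta) = 1 - a\cos(p\theta) + b\cos(k\theta)$ satisfies $g_1(\theta) \ge 0$ for all $\theta \in \mathbb{R}$. -/
/-!
Write `k = p m` and `c = π / (2m)`, so that `b = tan c / m` and, with `φ = pθ`,
`g₁ = 1 - a cos φ + (tan c / m) cos (mφ)`. Where `cos φ ≤ 0` this is at least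
`1 - tan c / m ≥ 0`, as `c ≤ π/4`. Where `cos φ ≥ 0` the bound on `a` reduces the claim to
`F φ = cos c - cos φ + (sin c / m) cos (mφ) ≥ 0`. As `cos (mφ)` is a polynomial in `cos φ`
(Chebyshev), we may take `φ ∈ [0, π/2]`. There `F` vanishes at `c`, and
`F' φ = sin φ - sin c sin (mφ)` is `≥ 0` on `[c, π/2]` trivially and `≤ 0` on `[0, c]` by the
inequality `sin (u/m) ≤ sin c sin u`, which holds on `[0, π/2]` because its two sides agree at
the endpoints and their difference is concave.
-/

open Real Set

lemma sin_div_le_sin_pi_div_two_div_mul_sin {m : ℝ} (hm : 1 ≤ m) {u : ℝ} (hu0 : 0 ≤ u)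
    (hu1 : u ≤ π / 2) : sin (u / m) ≤ sin (π / (2 * m)) * sin u := by
  have hm0 : 0 < m := by linarith
  set c := π / (2 * m)
  have hc : 1 / m ≤ sin c := by
    have hc0 : 0 ≤ c := by positivity
    have hc1 : c ≤ π / 2 := by
      rw [div_le_div_iff₀ (by positivity) two_pos]; nlinarith [pi_pos]
    calc 1 / m = 2 / π * c := by simp only [c]; field_simp
      _ ≤ sin c := mul_le_sin hc0 hc1
  set g : ℝ → ℝ := fun x ↦ sin c * sin x - sin (x / m)
  set g' : ℝ → ℝ := fun x ↦ sin c * cos x - cos (x / m) * (1 / m)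
  have hg : ∀ x, HasDerivAt g (g' x) x := fun x ↦
    ((hasDerivAt_sin x).const_mul _).sub ((hasDerivAt_id' x).div_const m).sin
  have hg' : ∀ x, HasDerivAt g' (sin (x / m) * (1 / m) * (1 / m) - sin c * sin x) x := by
    intro x
    refine (((hasDerivAt_cos x).const_mul (sin c)).sub
      (((hasDerivAt_id' x).div_const m).cos.mul_const (1 / m))).congr_deriv ?_
    ring
  have hconc : ConcaveOn ℝ (Icc 0 (π / 2)) g := by
    refine concaveOn_of_hasDerivWithinAt2_nonpos (convex_Icc _ _) (by fun_prop)
      (fun x _ ↦ (hg x).hasDerivWithinAt) (fun x _ ↦ (hg' x).hasDerivWithinAt) ?_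
    intro x hx
    rw [interior_Icc] at hx
    obtain ⟨hx0, hx1⟩ := hx
    have hxm0 : 0 ≤ x / m := by positivity
    have hxm : x / m ≤ x := div_le_self hx0.le hm
    have hsin : sin (x / m) ≤ sin x :=
      sin_le_sin_of_le_of_le_pi_div_two (by linarith [pi_pos]) hx1.le hxm
    have hsin0 : 0 ≤ sin (x / m) := sin_nonneg_of_nonneg_of_le_pi hxm0 (by linarith)
    have hm1 : 1 / m * (1 / m) ≤ sin c :=
      (mul_le_of_le_one_right (by positivity) ((div_le_one hm0).2 hm)).trans hc
    nlinarith
  have hmin := hconc.min_le_of_mem_Icc (left_mem_Icc.2 (by positivity))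
    (right_mem_Icc.2 (by positivity)) ⟨hu0, hu1⟩
  have hright : π / 2 / m = c := by ring
  simp only [g, hright, sin_zero, zero_div, mul_zero, sin_pi_div_two, mul_one,
    sub_self, min_self] at hmin
  linarith

lemma cos_sub_cos_le_sin_div_mul_cos_mul {m : ℝ} (hm : 1 ≤ m) {x : ℝ} (hx0 : 0 ≤ x)
    (hx1 : x ≤ π / 2) :
    cos x - cos (π / (2 * m)) ≤ sin (π / (2 * m)) / m * cos (m * x) := by
  have hm0 : 0 < m := by linarith
  set c := π / (2 * m)
  have hc0 : 0 ≤ c := by positivity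
  have hmc : m * c = π / 2 := by simp only [c]; field_simp
  have hc1 : c ≤ π / 2 := by nlinarith
  set F : ℝ → ℝ := fun y ↦ sin c / m * cos (m * y) - cos y
  have hF : ∀ y, HasDerivAt F (sin y - sin c * sin (m * y)) y := by
    intro y
    refine ((((hasDerivAt_id' y).const_mul m).cos.const_mul (sin c / m)).sub
      (hasDerivAt_cos y)).congr_deriv ?_
    field_simp
    ring
  suffices F c ≤ F x by
    simp only [F, hmc, cos_pi_div_two, mul_zero, zero_sub] at this
    linarith
  rcases le_total x c with hxc | hcx
  · refine antitoneOn_of_hasDerivWithinAt_nonpos (convex_Icc 0 c) (by fun_prop)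
      (fun y _ ↦ (hF y).hasDerivWithinAt) ?_ ⟨hx0, hxc⟩ ⟨hc0, le_rfl⟩ hxc
    intro y hy
    rw [interior_Icc] at hy
    have hsin := sin_div_le_sin_pi_div_two_div_mul_sin hm (u := m * y) (by nlinarith [hy.1])
      (by nlinarith [hy.2])
    rw [mul_div_cancel_left₀ y hm0.ne'] at hsin
    linarith
  · refine monotoneOn_of_hasDerivWithinAt_nonneg (convex_Icc c (π / 2)) (by fun_prop)
      (fun y _ ↦ (hF y).hasDerivWithinAt) ?_ ⟨le_rfl, hc1⟩ ⟨hcx, hx1⟩ hcx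
    intro y hy
    rw [interior_Icc] at hy
    have hsin : sin c ≤ sin y :=
      sin_le_sin_of_le_of_le_pi_div_two (by linarith [pi_pos]) hy.2.le hy.1.le
    have hsinc : 0 ≤ sin c := sin_nonneg_of_nonneg_of_le_pi hc0 (by linarith [pi_pos])
    nlinarith [sin_le_one (m * y)]

lemma cos_nat_mul_eq_of_cos_eq {x y : ℝ} (h : cos x = cos y) (n : ℕ) :
    cos (n * x) = cos (n * y) := by
  simpa using congrArg (Polynomial.eval · (Polynomial.Chebyshev.T ℝ n)) h

lemma cos_sub_cos_le_sin_div_mul_cos_mul_of_cos_nonneg {m : ℕ} (hm : 1 ≤ m) {x : ℝ}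
    (hx : 0 ≤ cos x) :
    cos x - cos (π / (2 * m)) ≤ sin (π / (2 * m)) / m * cos (m * x) := by
  have hy : cos (arccos (cos x)) = cos x := cos_arccos (neg_one_le_cos x) (cos_le_one x)
  rw [← hy, ← cos_nat_mul_eq_of_cos_eq hy m]
  exact cos_sub_cos_le_sin_div_mul_cos_mul (by exact_mod_cast hm) (arccos_nonneg _)
    (arccos_le_pi_div_two.2 hx)

lemma one_sub_mul_cos_add_tan_div_mul_cos_mul_nonneg {m : ℕ} (hm : 2 ≤ m) {a : ℝ}
    (ha0 : 0 ≤ a) (ha : a ≤ 1 / cos (π / (2 * m))) (φ : ℝ) :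
    0 ≤ 1 - a * cos φ + tan (π / (2 * m)) / m * cos (m * φ) := by
  have hm' : (2 : ℝ) ≤ m := by exact_mod_cast hm
  set c := π / (2 * m)
  have hc0 : 0 < c := by positivity
  have hc1 : c ≤ π / 4 := by
    rw [div_le_div_iff₀ (by positivity) four_pos]; nlinarith [pi_pos]
  have hcos : 0 < cos c := cos_pos_of_mem_Ioo ⟨by linarith [pi_pos], by linarith [pi_pos]⟩
  rcases le_total (cos φ) 0 with hφ | hφ
  · have htan : tan c ≤ 1 := tan_pi_div_four ▸ strictMonoOn_tan.monotoneOn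
      ⟨by linarith [pi_pos], by linarith [pi_pos]⟩ ⟨by linarith [pi_pos], by linarith [pi_pos]⟩
      hc1
    have hb0 : 0 ≤ tan c / m := div_nonneg (tan_nonneg_of_nonneg_of_le_pi_div_two hc0.le
      (by linarith [pi_pos])) (by positivity)
    have hb1 : tan c / m ≤ 1 := div_le_one_of_le₀ (by linarith) (by positivity)
    nlinarith [mul_nonneg hb0 (neg_le_iff_add_nonneg.1 (neg_one_le_cos (m * φ))),
      mul_nonpos_of_nonneg_of_nonpos ha0 hφ]
  · have hF := cos_sub_cos_le_sin_div_mul_cos_mul_of_cos_nonneg (by omega : 1 ≤ m) hφ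
    have hac : a * cos c ≤ 1 := (le_div_iff₀ hcos).1 ha
    have hsplit : (1 - a * cos φ + tan c / m * cos (m * φ)) * cos c =
        (sin c / m * cos (m * φ) - (cos φ - cos c)) + cos φ * (1 - a * cos c) := by
      rw [tan_eq_sin_div_cos]; field_simp; ring
    refine nonneg_of_mul_nonneg_left ?_ hcos
    rw [hsplit]
    exact add_nonneg (sub_nonneg.2 hF) (mul_nonneg hφ (sub_nonneg.2 hac))

theorem stmt14_general (k p : ℕ) (a : ℝ) (hp2 : 2 ≤ p)
    (hpk : p ≤ k - 2) (hdvd : p ∣ k) (ha0 : 0 < a)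
    (ha : a ≤ 1 / Real.cos ((p : ℝ) * Real.pi / (2 * k))) :
    ∀ θ : ℝ, 0 ≤ 1 - a * Real.cos (p * θ) +
      ((p : ℝ) / k) * Real.tan ((p : ℝ) * Real.pi / (2 * k)) * Real.cos (k * θ) := by
  intro θ
  obtain ⟨m, rfl⟩ := hdvd
  have hm : 2 ≤ m := by
    by_contra! h
    interval_cases m <;> omega
  have hp : (p : ℝ) ≠ 0 := by positivity
  have hangle : (p : ℝ) * π / (2 * (p * m)) = π / (2 * m) := by field_simp
  have hterm : (p : ℝ) / (p * m) * tan (π / (2 * m)) * cos (p * m * θ) =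
      tan (π / (2 * m)) / m * cos (m * (p * θ)) := by
    rw [mul_comm (p : ℝ) m, mul_assoc]; field_simp
  push_cast at ha ⊢
  rw [hangle] at ha ⊢
  rw [hterm]
  exact one_sub_mul_cos_add_tan_div_mul_cos_mul_nonneg hm ha0.le ha (p * θ)

/-- for even `k, p` with `p ∣ k`, `2 ≤ p ≤ k-2`,
`0 < a ≤ 1/cos(pπ/(2k))` and `b = (p/k)tan(pπ/(2k))`, the trigonometric polynomial
`g₁(θ) = 1 - a cos(pθ) + b cos(kθ)` is nonnegative everywhere. -/
theorem stmt14 (k p : ℕ) (a : ℝ) (hke : Even k) (hpe : Even p) (hp2 : 2 ≤ p)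
    (hpk : p ≤ k - 2) (hdvd : p ∣ k) (ha0 : 0 < a)
    (ha : a ≤ 1 / Real.cos ((p : ℝ) * Real.pi / (2 * k))) :
    ∀ θ : ℝ, 0 ≤ 1 - a * Real.cos (p * θ) +
      ((p : ℝ) / k) * Real.tan ((p : ℝ) * Real.pi / (2 * k)) * Real.cos (k * θ) :=
  stmt14_general k p a hp2 hpk hdvd ha0 ha
end

section
/- Let $k \ge 4$ be an even integer and let $p, q \ge 1$ be integers with $p + 2q = k - 2$ and $p$ even. Then $\frac{(p+q)!\,q!}{(\frac{k}{2}-1)!\,(\frac{k}{2}-1)!} > \frac{1}{\cos\left(\frac{p\pi}{2k}\right)}$. -/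
/-!
Write `k = 2 (m + 1)`, `p = 2 t`, `q = m - t`, so the angle is `t π / (2 (m + 1))`. Jordan's
inequality `sin y > 2 y / π` at `y = π / 2 - x` gives `cos x > (m + 1 - t) / (m + 1)`, while the
factorial ratio `(m + t)! (m - t)! / (m!)²` is at least `(m + 1) / (m + 1 - t)`: raising `t` by one
multiplies the ratio by `(m + t + 1) / (m - t)`, which beats the growth of `(m + 1) / (m + 1 - t)`.
-/

open Real Nat

theorem Real.one_sub_mul_lt_cos {x : ℝ} (hx : 0 < x) (hx' : x < π / 2) :
    1 - 2 / π * x < cos x := by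
  have h := mul_lt_sin (x := π / 2 - x) (by linarith) (by linarith)
  rw [sin_pi_div_two_sub] at h
  calc 1 - 2 / π * x = 2 / π * (π / 2 - x) := by field_simp
    _ < cos x := h

theorem Real.one_div_cos_lt {t n : ℝ} (ht : 0 < t) (htn : t < n) :
    1 / cos (t * π / (2 * n)) < n / (n - t) := by
  have hn : 0 < n := ht.trans htn
  have hjordan := one_sub_mul_lt_cos (x := t * π / (2 * n)) (by positivity)
    (by rw [div_lt_div_iff₀ (by positivity) two_pos]; nlinarith [pi_pos])
  have hlin : 1 - 2 / π * (t * π / (2 * n)) = (n - t) / n := by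
    field_simp
  rw [hlin] at hjordan
  have hpos : 0 < (n - t) / n := div_pos (by linarith) hn
  calc 1 / cos (t * π / (2 * n)) < 1 / ((n - t) / n) := one_div_lt_one_div_of_lt hpos hjordan
    _ = n / (n - t) := one_div_div _ _

theorem Nat.add_succ_mul_factorial_mul_factorial_le (r t : ℕ) :
    (r + t + 1) * ((r + t)! * (r + t)!) ≤ (r + 1) * ((r + 2 * t)! * r !) := by
  induction t generalizing r with
  | zero => simp
  | succ t ih =>
    have hshift : r + (t + 1) = r + 1 + t := by ring
    have htop : (r + 2 * (t + 1))! = (r + 1 + 2 * t + 1) * (r + 1 + 2 * t)! := by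
      rw [← factorial_succ]; ring_nf
    calc (r + (t + 1) + 1) * ((r + (t + 1))! * (r + (t + 1))!)
        ≤ (r + 1 + 1) * ((r + 1 + 2 * t)! * (r + 1)!) := hshift ▸ ih (r + 1)
      _ = (r + 1) * ((r + 1 + 1) * (r + 1 + 2 * t)! * r !) := by rw [factorial_succ r]; ring
      _ ≤ (r + 1) * ((r + 1 + 2 * t + 1) * (r + 1 + 2 * t)! * r !) := by
          gcongr (r + 1) * (?_ * _ * _); omega
      _ = (r + 1) * ((r + 2 * (t + 1))! * r !) := by rw [htop]

theorem add_succ_div_succ_le_factorial_ratio (r t : ℕ) :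
    ((r + t + 1 : ℕ) : ℝ) / (r + 1 : ℕ) ≤
      ((r + 2 * t)! * r ! : ℝ) / ((r + t)! * (r + t)! : ℕ) := by
  rw [div_le_div_iff₀ (by positivity) (by positivity)]
  exact_mod_cast (add_succ_mul_factorial_mul_factorial_le r t).trans_eq (mul_comm _ _)

theorem stmt15_general (k p q : ℕ) (hpe : Even p)
    (hp : 1 ≤ p) (hpq : p + 2 * q = k - 2) :
    (1 : ℝ) / Real.cos ((p : ℝ) * Real.pi / (2 * k)) <
      ((p + q).factorial * q.factorial : ℝ) /
        ((k / 2 - 1).factorial * (k / 2 - 1).factorial : ℕ) := by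
  obtain ⟨t, rfl⟩ := hpe
  obtain rfl : k = 2 * (q + t + 1) := by omega
  have ht : (0 : ℝ) < t := by exact_mod_cast (show 0 < t by omega)
  have hangle : ((t + t : ℕ) : ℝ) * π / (2 * (2 * (q + t + 1) : ℕ)) =
      t * π / (2 * (q + t + 1 : ℕ)) := by
    push_cast; field_simp; ring
  rw [hangle, show 2 * (q + t + 1) / 2 - 1 = q + t by omega, show t + t + q = q + 2 * t by ring]
  calc 1 / cos (t * π / (2 * (q + t + 1 : ℕ)))
      < (q + t + 1 : ℕ) / ((q + t + 1 : ℕ) - t) := one_div_cos_lt ht (by push_cast; linarith)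
    _ = ((q + t + 1 : ℕ) : ℝ) / (q + 1 : ℕ) := by push_cast; ring
    _ ≤ _ := add_succ_div_succ_le_factorial_ratio q t

/-- for even `k ≥ 4` and `p, q ≥ 1` with `p` even and `p + 2q = k - 2`,
`(p+q)! q! / ((k/2-1)!)² > 1/cos(pπ/(2k))`. -/
theorem stmt15 (k p q : ℕ) (hk : 4 ≤ k) (hke : Even k) (hpe : Even p)
    (hp : 1 ≤ p) (hq : 1 ≤ q) (hpq : p + 2 * q = k - 2) :
    (1 : ℝ) / Real.cos ((p : ℝ) * Real.pi / (2 * k)) <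
      ((p + q).factorial * q.factorial : ℝ) /
        ((k / 2 - 1).factorial * (k / 2 - 1).factorial : ℕ) :=
  stmt15_general k p q hpe hp hpq
end
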